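/- arXiv:2312.03686 — 3 statements merged into one kernel-verified Lean document; each statement's English description precedes it below -/
import Mathlib

section
/- Let X and Y be independent random variables, each with the binomial distribution Bin(n, 1/2). Then P(X = Y) < 1/√(πn), and there is a constant K > 0 (independent of n) such that P(X = Y) ≥ (1/√(πn))·(1 − 1/(8n)) − K/n^{5/2} for all n ≥ 1. -/
/-
By independence and Vandermonde, `P(X = Y) = ∑ₖ C(n,k)² / 4ⁿ = C(2n,n) / 4ⁿ`. Writing
`n ! = √(2πn) (n / e) ^ n * exp θₙ`, this is `exp (θ₂ₙ - 2θₙ) / √(πn)`. Telescoping the series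
expansion of `log (stirlingSeq k) - log (stirlingSeq (k + 1))` from `k = n` to infinity gives
`1 / (12n + 6) ≤ θₙ ≤ 1 / (12n)`, so the exponent is negative and at least
`-1 / (8n) - 1 / (96n²)`; conclude with `exp x ≥ 1 + x`.
-/

open MeasureTheory ProbabilityTheory Real Filter Topology Nat Stirling

theorem sub_le_of_tendsto_of_sub_succ_le {f g : ℕ → ℝ} {L : ℝ} (hf : Tendsto f atTop (𝓝 L))
    (hg : Tendsto g atTop (𝓝 0)) {n : ℕ} (hfg : ∀ k ≥ n, f k - f (k + 1) ≤ g k - g (k + 1)) :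
    f n - L ≤ g n := by
  have hmono : Monotone fun k => f (k + n) - g (k + n) :=
    monotone_nat_of_le_succ fun k => by
      rw [add_right_comm]
      linarith [hfg (k + n) (by omega)]
  have hlim := (hf.sub hg).comp (tendsto_add_atTop_nat n)
  rw [sub_zero] at hlim
  have := hmono.ge_of_tendsto hlim 0
  rw [zero_add] at this
  linarith

theorem le_sub_of_tendsto_of_le_sub_succ {f g : ℕ → ℝ} {L : ℝ} (hf : Tendsto f atTop (𝓝 L))
    (hg : Tendsto g atTop (𝓝 0)) {n : ℕ} (hfg : ∀ k ≥ n, g k - g (k + 1) ≤ f k - f (k + 1)) :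
    g n ≤ f n - L := by
  have := sub_le_of_tendsto_of_sub_succ_le (f := fun k => -f k) (g := fun k => -g k)
    hf.neg (by simpa using hg.neg) (fun k hk => by linarith [hfg k hk])
  linarith

namespace Stirling

/-- The `θₙ` of `n ! = √(2πn) (n / e) ^ n * exp θₙ`, for `n ≠ 0`. -/
noncomputable def remainder (n : ℕ) : ℝ := log (stirlingSeq n) - log √π

theorem log_stirlingSeq_sub_log_stirlingSeq_succ_le {n : ℕ} (hn : n ≠ 0) :
    log (stirlingSeq n) - log (stirlingSeq (n + 1)) ≤ 1 / (12 * n) - 1 / (12 * (n + 1)) := by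
  convert log_stirlingSeq_sdiff_le n using 1
  field_simp
  ring

theorem le_log_stirlingSeq_sub_log_stirlingSeq_succ {n : ℕ} (hn : n ≠ 0) :
    1 / (6 * (2 * n + 1)) - 1 / (6 * (2 * (n + 1) + 1)) ≤
      log (stirlingSeq n) - log (stirlingSeq (n + 1)) := by
  obtain ⟨m, rfl⟩ := Nat.exists_eq_succ_of_ne_zero hn
  -- the first term `1 / (3 (2n + 1)²)` of the series already beats `1 / (3 (2n + 1) (2n + 3))`
  refine le_trans ?_ (le_hasSum (log_stirlingSeq_sdiff_hasSum m) 0 fun j _ => by positivity)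
  push_cast
  rw [div_sub_div _ _ (by positivity) (by positivity), div_le_iff₀ (by positivity)]
  field_simp
  nlinarith [(m.cast_nonneg : (0 : ℝ) ≤ m)]

theorem tendsto_log_stirlingSeq : Tendsto (fun n => log (stirlingSeq n)) atTop (𝓝 (log √π)) :=
  (continuousAt_log (by positivity)).tendsto.comp tendsto_stirlingSeq_sqrt_pi

theorem remainder_le {n : ℕ} (hn : n ≠ 0) : remainder n ≤ 1 / (12 * n) := by
  have hg : Tendsto (fun k : ℕ => 1 / (12 * (k : ℝ))) atTop (𝓝 0) :=
    tendsto_const_nhds.div_atTop (tendsto_natCast_atTop_atTop.const_mul_atTop (by norm_num))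
  refine sub_le_of_tendsto_of_sub_succ_le tendsto_log_stirlingSeq hg fun k hk => ?_
  exact_mod_cast log_stirlingSeq_sub_log_stirlingSeq_succ_le (by omega)

theorem le_remainder {n : ℕ} (hn : n ≠ 0) : 1 / (6 * (2 * n + 1)) ≤ remainder n := by
  have hg : Tendsto (fun k : ℕ => 1 / (6 * (2 * (k : ℝ) + 1))) atTop (𝓝 0) :=
    tendsto_const_nhds.div_atTop (tendsto_natCast_atTop_atTop.const_mul_atTop two_pos
      |>.atTop_add tendsto_const_nhds |>.const_mul_atTop (by norm_num))
  refine le_sub_of_tendsto_of_le_sub_succ tendsto_log_stirlingSeq hg fun k hk => ?_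
  exact_mod_cast le_log_stirlingSeq_sub_log_stirlingSeq_succ (by omega)

theorem stirlingSeq_eq_sqrt_pi_mul_exp_remainder {n : ℕ} (hn : n ≠ 0) :
    stirlingSeq n = √π * exp (remainder n) := by
  obtain ⟨m, rfl⟩ := Nat.exists_eq_succ_of_ne_zero hn
  rw [remainder, exp_sub, exp_log (stirlingSeq'_pos m), exp_log (by positivity)]
  field_simp

theorem remainder_two_mul_sub_two_mul_remainder_neg {n : ℕ} (hn : n ≠ 0) :
    remainder (2 * n) - 2 * remainder n < 0 := by
  have h2n := remainder_le (n := 2 * n) (by omega)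
  have hn' := le_remainder hn
  have hn1 : (1 : ℝ) ≤ n := by exact_mod_cast Nat.one_le_iff_ne_zero.mpr hn
  push_cast at h2n
  calc remainder (2 * n) - 2 * remainder n
        ≤ 1 / (12 * (2 * n)) - 2 * (1 / (6 * (2 * n + 1))) := by
        linarith
    _ < 0 := by
        rw [sub_neg]
        field_simp
        linarith

theorem le_remainder_two_mul_sub_two_mul_remainder {n : ℕ} (hn : n ≠ 0) :
    -(1 / (8 * (n : ℝ))) - 1 / (96 * n ^ 2) ≤ remainder (2 * n) - 2 * remainder n := by
  have h2n := le_remainder (n := 2 * n) (by omega)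
  have hn' := remainder_le hn
  push_cast at h2n
  calc -(1 / (8 * (n : ℝ))) - 1 / (96 * n ^ 2)
        ≤ 1 / (6 * (2 * (2 * n) + 1)) - 2 * (1 / (12 * n)) := by
        rw [← sub_nonneg]
        field_simp
        ring_nf
        positivity
    _ ≤ remainder (2 * n) - 2 * remainder n := by
        linarith

end Stirling

namespace Nat

theorem centralBinom_div_four_pow_eq {n : ℕ} (hn : n ≠ 0) :
    (centralBinom n : ℝ) / 4 ^ n = stirlingSeq (2 * n) / (stirlingSeq n ^ 2 * √n) := by
  have hc : (centralBinom n : ℝ) = (2 * n)! / (n ! * n !) := by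
    rw [centralBinom, cast_choose ℝ (by omega : n ≤ 2 * n), show 2 * n - n = n by omega]
  have h4 : (4 : ℝ) ^ n * (n / exp 1) ^ (2 * n) = (↑(2 * n) / exp 1) ^ (2 * n) := by
    rw [pow_mul, pow_mul, ← mul_pow]; push_cast; ring
  have hs : √(2 * ↑(2 * n)) = 2 * √n := by
    rw [show (2 : ℝ) * ↑(2 * n) = 2 ^ 2 * n by push_cast; ring, sqrt_mul (by positivity),
      sqrt_sq zero_le_two]
  simp only [stirlingSeq, hc, ← h4, hs]
  field_simp
  rw [sq_sqrt (by positivity), sq_sqrt (by positivity)]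
  ring

theorem centralBinom_div_four_pow_eq_exp {n : ℕ} (hn : n ≠ 0) :
    (centralBinom n : ℝ) / 4 ^ n = exp (remainder (2 * n) - 2 * remainder n) / √(π * n) := by
  rw [centralBinom_div_four_pow_eq hn, stirlingSeq_eq_sqrt_pi_mul_exp_remainder hn,
    stirlingSeq_eq_sqrt_pi_mul_exp_remainder (by omega), exp_sub,
    show (2 : ℝ) * remainder n = remainder n + remainder n from two_mul _, exp_add,
    sqrt_mul pi_pos.le]
  field_simp

end Nat

theorem le_exp_div_sqrt_pi_mul {x y : ℝ} (hy : 1 ≤ y)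
    (hx : -(1 / (8 * y)) - 1 / (96 * y ^ 2) ≤ x) :
    1 / √(π * y) * (1 - 1 / (8 * y)) - (1 / 96) / y ^ ((5 : ℝ) / 2) ≤ exp x / √(π * y) := by
  have hy0 : 0 < y := by linarith
  have hpow : y ^ ((5 : ℝ) / 2) ≤ y ^ 2 * √(π * y) := by
    rw [show (5 : ℝ) / 2 = 2 + 1 / 2 by norm_num, rpow_add hy0, rpow_two, ← sqrt_eq_rpow]
    gcongr
    nlinarith [pi_gt_three]
  calc 1 / √(π * y) * (1 - 1 / (8 * y)) - (1 / 96) / y ^ ((5 : ℝ) / 2)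
      ≤ 1 / √(π * y) * (1 - 1 / (8 * y)) - (1 / 96) / (y ^ 2 * √(π * y)) := by gcongr
    _ = (1 - 1 / (8 * y) - 1 / (96 * y ^ 2)) / √(π * y) := by field_simp
    _ ≤ (x + 1) / √(π * y) := by gcongr; linarith
    _ ≤ exp x / √(π * y) := by gcongr; exact add_one_le_exp x

theorem ProbabilityTheory.IndepFun.measure_eq_eq_tsum {Ω α : Type*} [MeasurableSpace Ω]
    [MeasurableSpace α] [MeasurableSingletonClass α] [Countable α] {μ : Measure Ω}
    {X Y : Ω → α} (hX : Measurable X) (hY : Measurable Y) (hXY : IndepFun X Y μ) :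
    μ {ω | X ω = Y ω} = ∑' a, μ {ω | X ω = a} * μ {ω | Y ω = a} := by
  have hset : {ω | X ω = Y ω} = ⋃ a, X ⁻¹' {a} ∩ Y ⁻¹' {a} := by
    ext ω
    simp [eq_comm]
  rw [hset, measure_iUnion]
  · exact tsum_congr fun a => hXY.measure_inter_preimage_eq_mul _ _
      (measurableSet_singleton a) (measurableSet_singleton a)
  · exact fun a b hab => Set.disjoint_left.mpr fun ω ha hb => hab (ha.1.symm.trans hb.1)
  · exact fun a => (hX (measurableSet_singleton a)).inter (hY (measurableSet_singleton a))

theorem sum_range_choose_div_two_pow_sq (n : ℕ) :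
    ∑ k ∈ Finset.range (n + 1), ((n.choose k : ℝ) / 2 ^ n) ^ 2 =
      (centralBinom n : ℝ) / 4 ^ n := by
  have h4 : (4 : ℝ) ^ n = ((2 : ℝ) ^ n) ^ 2 := by rw [← pow_mul, mul_comm, pow_mul]; norm_num
  rw [centralBinom_eq_two_mul_choose, ← sum_range_choose_sq, h4, Nat.cast_sum, Finset.sum_div]
  simp_rw [div_pow, Nat.cast_pow]

theorem toReal_measure_eq_eq_centralBinom_div_four_pow {Ω : Type*} [MeasurableSpace Ω]
    {μ : Measure Ω} {X Y : Ω → ℕ} {n : ℕ} (hX : Measurable X) (hY : Measurable Y)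
    (hXY : IndepFun X Y μ)
    (hpX : ∀ k : ℕ, μ {ω | X ω = k} = ENNReal.ofReal ((n.choose k : ℝ) / 2 ^ n))
    (hpY : ∀ k : ℕ, μ {ω | Y ω = k} = ENNReal.ofReal ((n.choose k : ℝ) / 2 ^ n)) :
    (μ {ω | X ω = Y ω}).toReal = (centralBinom n : ℝ) / 4 ^ n := by
  have hsupp : ∀ k ∉ Finset.range (n + 1),
      ENNReal.ofReal ((n.choose k : ℝ) / 2 ^ n) * ENNReal.ofReal ((n.choose k : ℝ) / 2 ^ n) = 0 :=
    fun k hk => by simp [Nat.choose_eq_zero_of_lt (by simpa using hk : n < k)]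
  rw [hXY.measure_eq_eq_tsum hX hY, ← sum_range_choose_div_two_pow_sq]
  simp_rw [hpX, hpY]
  rw [tsum_eq_sum hsupp, ENNReal.toReal_sum (fun _ _ => by finiteness)]
  refine Finset.sum_congr rfl fun k _ => ?_
  rw [ENNReal.toReal_mul, ENNReal.toReal_ofReal (by positivity), sq]

/-- If `X` and `Y` are independent `Bin(n, 1/2)` random variables, then
`P(X = Y) < 1/√(πn)`, and there is a constant `K > 0` independent of `n` with
`P(X = Y) ≥ (1/√(πn)) (1 - 1/(8n)) - K/n^{5/2}` for all `n ≥ 1`. -/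
theorem binomial_collision_probability :
    ∃ K : ℝ, 0 < K ∧
      ∀ (n : ℕ), 1 ≤ n →
        ∀ (Ω : Type) (_ : MeasurableSpace Ω) (μ : Measure Ω), IsProbabilityMeasure μ →
        ∀ (X Y : Ω → ℕ), Measurable X → Measurable Y → IndepFun X Y μ →
          (∀ k : ℕ, μ {ω | X ω = k} = ENNReal.ofReal ((n.choose k : ℝ) / 2 ^ n)) →
          (∀ k : ℕ, μ {ω | Y ω = k} = ENNReal.ofReal ((n.choose k : ℝ) / 2 ^ n)) →
          (μ {ω | X ω = Y ω}).toReal < 1 / Real.sqrt (Real.pi * n) ∧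
          (μ {ω | X ω = Y ω}).toReal ≥
            (1 / Real.sqrt (Real.pi * n)) * (1 - 1 / (8 * n)) - K / (n : ℝ) ^ ((5 : ℝ) / 2) := by
  refine ⟨1 / 96, by norm_num, fun n hn Ω _ μ _ X Y hX hY hXY hpX hpY => ?_⟩
  have hn0 : n ≠ 0 := by omega
  rw [toReal_measure_eq_eq_centralBinom_div_four_pow hX hY hXY hpX hpY,
    centralBinom_div_four_pow_eq_exp hn0]
  have hexp_lt_one := Real.exp_lt_one_iff.mpr (remainder_two_mul_sub_two_mul_remainder_neg hn0)
  exact ⟨div_lt_div_of_pos_right hexp_lt_one (by positivity),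
    le_exp_div_sqrt_pi_mul (by exact_mod_cast hn) (le_remainder_two_mul_sub_two_mul_remainder hn0)⟩
end

section
/- Let i, j, i', j' be four pairwise distinct fixed vertices (so {i,j} ∩ {i',j'} = ∅) and let G = G(n,1/2). Then π n · P(w_1^G(i) = w_1^G(j) and w_1^G(i') = w_1^G(j')) → 1 as n → ∞; that is, this probability equals (1 + o(1))/(π n). -/
open Filter

/-- `walkCount G k x` is the number of walks of length `k` in `G` starting at `x`. -/
noncomputable def walkCount {V : Type*} (G : SimpleGraph V) (k : ℕ) (x : V) : ℕ :=
  Nat.card {p : (y : V) × G.Walk x y // p.2.length = k}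

/-- `Pr n P` is the probability that a uniformly random simple graph on `Fin n`
satisfies the property `P`. -/
noncomputable def Pr (n : ℕ) (P : SimpleGraph (Fin n) → Prop) : ℝ :=
  (Nat.card {G : SimpleGraph (Fin n) // P G} : ℝ) / (Nat.card (SimpleGraph (Fin n)) : ℝ)

/-!
Split the vertex set into the `2k` vertices of the pairs and the remaining `m = n - 2k` vertices
`R`. A graph is then the same as a graph `H` on the pair vertices, the neighbourhoods in `R` of the
pair vertices, and a graph on `R`, all chosen independently and uniformly. Given `H`, the condition
on the pair `(a, b)` reads `deg_H a + |A| = deg_H b + |B|` for the neighbourhoods `A, B ⊆ R`, and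
`(A, B) ↦ A ⊔ Bᶜ` shows that it has exactly `C(2m, m + deg_H b - deg_H a)` solutions; different
pairs involve disjoint data. Since the offsets stay bounded, Stirling's formula gives
`C(2m, m + O(1)) ~ 4^m / √(π m)`, so the probability is an average over `H` of products of `k`
factors `(1 + o(1)) / √(π n)`.
-/

theorem walkCount_one {V : Type*} (G : SimpleGraph V) (x : V) :
    walkCount G 1 x = Nat.card (G.neighborSet x) := by
  refine Nat.card_congr
    { toFun p := ⟨p.1.1, SimpleGraph.Walk.adj_of_length_eq_one p.2⟩
      invFun y := ⟨⟨y, y.2.toWalk⟩, rfl⟩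
      left_inv := ?_
      right_inv _ := rfl }
  rintro ⟨⟨y, _ | ⟨h, _ | _⟩⟩, hp⟩ <;> simp at hp ⊢

namespace SimpleGraph

variable {α β V W : Type*}

def sumAdj (G₁ : SimpleGraph α) (f : α → Set β) (G₂ : SimpleGraph β) : α ⊕ β → α ⊕ β → Prop
  | .inl a, .inl a' => G₁.Adj a a'
  | .inl a, .inr b => b ∈ f a
  | .inr b, .inl a => b ∈ f a
  | .inr b, .inr b' => G₂.Adj b b'

def sumEquiv : SimpleGraph (α ⊕ β) ≃ SimpleGraph α × (α → Set β) × SimpleGraph β where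
  toFun G := (G.comap .inl, fun a => {b | G.Adj (.inl a) (.inr b)}, G.comap .inr)
  invFun x :=
    { Adj := sumAdj x.1 x.2.1 x.2.2
      symm := ⟨by
        rintro (a | b) (a' | b') h <;> dsimp only [sumAdj] at h ⊢
        all_goals first | exact h.symm | exact h⟩
      loopless := ⟨by rintro (a | b) h <;> first | exact x.1.irrefl h | exact x.2.2.irrefl h⟩ }
  left_inv G := by
    ext (a | b) (a' | b') <;> simp [sumAdj, G.adj_comm]
  right_inv x := by
    obtain ⟨G₁, f, G₂⟩ := x
    refine Prod.ext ?_ (Prod.ext ?_ ?_) <;> ext <;> rfl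

theorem card_neighborSet_sumEquiv_symm_inl [Finite α] [Finite β]
    (x : SimpleGraph α × (α → Set β) × SimpleGraph β) (a : α) :
    Nat.card ((sumEquiv.symm x).neighborSet (.inl a)) =
      Nat.card (x.1.neighborSet a) + (x.2.1 a).ncard := by
  rw [Nat.card_congr Equiv.subtypeSum, Nat.card_sum]
  rfl

theorem card_neighborSet_comap_equiv (e : V ≃ W) (G : SimpleGraph W) (x : V) :
    Nat.card ((G.comap e).neighborSet x) = Nat.card (G.neighborSet (e x)) :=
  Nat.card_congr (e.subtypeEquiv fun _ => Iff.rfl)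

end SimpleGraph

namespace Function.Embedding

variable {K V : Type*}

open Classical in
noncomputable def sumComplRangeEquiv (p : K ↪ V) : K ⊕ {v // v ∉ Set.range p} ≃ V :=
  ((Equiv.ofInjective p p.injective).sumCongr (Equiv.refl _)).trans
    (Equiv.sumCompl (· ∈ Set.range p))

@[simp]
theorem sumComplRangeEquiv_inl (p : K ↪ V) (k : K) : p.sumComplRangeEquiv (.inl k) = p k := rfl

theorem card_compl_range [Finite V] (p : K ↪ V) :
    Nat.card {v // v ∉ Set.range p} = Nat.card V - Nat.card K := by
  have : Finite K := Finite.of_injective p p.injective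
  have := Nat.card_congr p.sumComplRangeEquiv
  rw [Nat.card_sum] at this
  omega

noncomputable def graphEquiv (p : K ↪ V) :
    SimpleGraph V ≃ SimpleGraph K × (K → Set {v // v ∉ Set.range p}) ×
      SimpleGraph {v // v ∉ Set.range p} :=
  p.sumComplRangeEquiv.symm.simpleGraph.trans SimpleGraph.sumEquiv

theorem card_simpleGraph [Finite V] (p : K ↪ V) :
    Nat.card (SimpleGraph V) = Nat.card (SimpleGraph K) *
      2 ^ (Nat.card K * Nat.card {v // v ∉ Set.range p}) *
        Nat.card (SimpleGraph {v // v ∉ Set.range p}) := by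
  have : Finite K := Finite.of_injective p p.injective
  have hset : Nat.card (Set {v // v ∉ Set.range p}) = 2 ^ Nat.card {v // v ∉ Set.range p} := by
    rw [← Nat.card_eq_fintype_card.trans Fintype.card_prop, ← Nat.card_fun]
    rfl
  rw [Nat.card_congr p.graphEquiv, Nat.card_prod, Nat.card_prod, Nat.card_fun, hset, ← pow_mul,
    mul_comm (Nat.card K), mul_assoc]

theorem card_neighborSet_graphEquiv_symm [Finite V] (p : K ↪ V)
    (x : SimpleGraph K × (K → Set {v // v ∉ Set.range p}) × SimpleGraph {v // v ∉ Set.range p})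
    (k : K) :
    Nat.card ((p.graphEquiv.symm x).neighborSet (p k)) =
      Nat.card (x.1.neighborSet k) + (x.2.1 k).ncard := by
  have : Finite K := Finite.of_injective p p.injective
  rw [← sumComplRangeEquiv_inl, graphEquiv, Equiv.symm_trans_apply]
  exact (SimpleGraph.card_neighborSet_comap_equiv _ _ _).trans (by
    rw [Equiv.symm_apply_apply]; exact SimpleGraph.card_neighborSet_sumEquiv_symm_inl x k)

end Function.Embedding

section Counting

variable {A B C L X R : Type*}

open Finset in
theorem card_finset_pairs_add_card_eq_add_card [Fintype R] [DecidableEq R] {u v : ℕ}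
    (h : u ≤ Fintype.card R) :
    Nat.card {AB : Finset R × Finset R // u + #AB.1 = v + #AB.2} =
      (2 * Fintype.card R).choose (Fintype.card R + v - u) := by
  -- `(A, B) ↦ A ⊕ Bᶜ` turns the condition into `#(A ⊕ Bᶜ) = |R| + v - u`.
  let e : Finset R × Finset R ≃ Finset (R ⊕ R) :=
    ((Equiv.refl _).prodCongr ⟨compl, compl, compl_compl, compl_compl⟩).trans
      Finset.sumEquiv.symm.toEquiv
  have he : ∀ AB : Finset R × Finset R,
      u + #AB.1 = v + #AB.2 ↔ #(e AB) = Fintype.card R + v - u := by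
    rintro ⟨A, B⟩
    show u + #A = v + #B ↔ _
    have hcard : #(e (A, B)) = #A + (Fintype.card R - #B) := by simp [e, card_compl]
    have := B.card_le_univ
    omega
  rw [Nat.card_congr (e.subtypeEquiv (q := fun s => #s = Fintype.card R + v - u) he),
    Nat.card_eq_fintype_card, Fintype.card_finset_len, Fintype.card_sum, two_mul]

theorem card_set_pairs_add_ncard_eq_add_ncard [Finite R] {u v : ℕ} (h : u ≤ Nat.card R) :
    Nat.card {AB : Set R × Set R // u + AB.1.ncard = v + AB.2.ncard} =
      (2 * Nat.card R).choose (Nat.card R + v - u) := by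
  classical
  have := Fintype.ofFinite R
  rw [Nat.card_eq_fintype_card (α := R)] at h ⊢
  rw [← card_finset_pairs_add_card_eq_add_card h]
  refine (Nat.card_congr ((Fintype.finsetEquivSet.prodCongr Fintype.finsetEquivSet).subtypeEquiv
    fun AB => ?_)).symm
  simp

theorem card_subtype_forall_pairs [Fintype L] (Q : L → X → X → Prop) :
    Nat.card {f : L × Bool → X // ∀ l, Q l (f (l, false)) (f (l, true))} =
      ∏ l, Nat.card {x : X × X // Q l x.1 x.2} := by
  let e : (L × Bool → X) ≃ (L → X × X) :=
    (Equiv.curry L Bool X).trans ((Equiv.refl L).arrowCongr (Equiv.boolArrowEquivProd X))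
  rw [Nat.card_congr ((e.subtypeEquiv (p := fun f => ∀ l, Q l (f (l, false)) (f (l, true)))
    (q := fun g => ∀ l, Q l (g l).1 (g l).2) fun f => Iff.rfl).trans
    (Equiv.subtypePiEquivPi (p := fun l (x : X × X) => Q l x.1 x.2))), Nat.card_pi]

theorem card_subtype_prod_prod_eq_sum_mul [Fintype A] [Finite B] (P : A → B → Prop) :
    Nat.card {x : A × B × C // P x.1 x.2.1} = (∑ a, Nat.card {b // P a b}) * Nat.card C := by
  let e : {x : A × B × C // P x.1 x.2.1} ≃ {ab : A × B // P ab.1 ab.2} × C :=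
    ((Equiv.prodAssoc A B C).symm.subtypeEquiv (q := fun x => P x.1.1 x.1.2)
      fun _ => Iff.rfl).trans
      (Equiv.prodSubtypeFstEquivSubtypeProd (p := fun ab : A × B => P ab.1 ab.2))
  rw [Nat.card_congr (e.trans ((Equiv.subtypeProdEquivSigmaSubtype P).prodCongr (Equiv.refl C))),
    Nat.card_prod, Nat.card_sigma]

end Counting

namespace SimpleGraph

variable {V L : Type*}

def HasEqualDegreesOnPairs (p : L × Bool → V) (G : SimpleGraph V) : Prop :=
  ∀ l, Nat.card (G.neighborSet (p (l, false))) = Nat.card (G.neighborSet (p (l, true)))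

theorem card_hasEqualDegreesOnPairs [Finite V] [Fintype L] [DecidableEq L] (p : L × Bool ↪ V)
    (h : 2 * Nat.card L ≤ Nat.card {v // v ∉ Set.range p}) :
    let m := Nat.card {v // v ∉ Set.range p}
    Nat.card {G // HasEqualDegreesOnPairs p G} =
      (∑ H : SimpleGraph (L × Bool), ∏ l, (2 * m).choose (m + Nat.card (H.neighborSet (l, true)) -
        Nat.card (H.neighborSet (l, false)))) * Nat.card (SimpleGraph {v // v ∉ Set.range p}) := by
  intro m
  let Q (H : SimpleGraph (L × Bool)) (f : L × Bool → Set {v // v ∉ Set.range p}) : Prop :=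
    ∀ l, Nat.card (H.neighborSet (l, false)) + (f (l, false)).ncard =
      Nat.card (H.neighborSet (l, true)) + (f (l, true)).ncard
  have hQ : ∀ x : SimpleGraph (L × Bool) × (L × Bool → Set {v // v ∉ Set.range p}) ×
      SimpleGraph {v // v ∉ Set.range p},
      Q x.1 x.2.1 ↔ HasEqualDegreesOnPairs p (p.graphEquiv.symm x) := by
    intro x
    simp only [Q, HasEqualDegreesOnPairs, p.card_neighborSet_graphEquiv_symm]
  rw [← Nat.card_congr (p.graphEquiv.symm.subtypeEquiv hQ), card_subtype_prod_prod_eq_sum_mul Q]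
  congr 1
  refine Finset.sum_congr rfl fun H _ => (card_subtype_forall_pairs fun l (A B : Set _) =>
    Nat.card (H.neighborSet (l, false)) + A.ncard =
      Nat.card (H.neighborSet (l, true)) + B.ncard).trans ?_
  refine Finset.prod_congr rfl fun l _ => card_set_pairs_add_ncard_eq_add_ncard ?_
  have : Nat.card (H.neighborSet (l, false)) ≤ Nat.card (L × Bool) := Finite.card_subtype_le _
  simp only [Nat.card_prod, Nat.card_eq_fintype_card (α := Bool), Fintype.card_bool] at this
  omega

theorem card_hasEqualDegreesOnPairs_div_card [Finite V] [Fintype L] [DecidableEq L]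
    (p : L × Bool ↪ V) (h : 4 * Nat.card L ≤ Nat.card V) :
    let m := Nat.card V - 2 * Nat.card L
    (Nat.card {G // HasEqualDegreesOnPairs p G} : ℝ) / Nat.card (SimpleGraph V) =
      (Nat.card (SimpleGraph (L × Bool)) : ℝ)⁻¹ * ∑ H : SimpleGraph (L × Bool), ∏ l,
        ((2 * m).choose (m + Nat.card (H.neighborSet (l, true)) -
          Nat.card (H.neighborSet (l, false))) : ℝ) / 4 ^ m := by
  intro m
  have hK : Nat.card (L × Bool) = 2 * Nat.card L := by
    rw [Nat.card_prod, Nat.card_eq_fintype_card (α := Bool), Fintype.card_bool, mul_comm]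
  have hR : Nat.card {v // v ∉ Set.range p} = m := by rw [p.card_compl_range, hK]
  have hG : (Nat.card (SimpleGraph {v // v ∉ Set.range p}) : ℝ) ≠ 0 := by
    exact_mod_cast Nat.card_pos.ne'
  have hpow : 2 ^ (2 * Nat.card L * m) = (4 ^ m) ^ Nat.card L := by
    rw [← pow_mul, show 4 = 2 ^ 2 from rfl, ← pow_mul]
    ring_nf
  rw [card_hasEqualDegreesOnPairs p (by omega), p.card_simpleGraph, hR, hK, hpow]
  simp only [Finset.prod_div_distrib, Finset.prod_const, Finset.card_univ,
    ← Nat.card_eq_fintype_card, ← Finset.sum_div]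
  push_cast
  field_simp

end SimpleGraph

section Asymptotics

open Real Stirling

theorem sqrt_pi_mul_choose_div_four_pow_eq {m : ℕ} (hm : m ≠ 0) :
    √(π * m) * (2 * m).choose m / 4 ^ m = √π * stirlingSeq (2 * m) / stirlingSeq m ^ 2 := by
  have hfact : ((2 * m).factorial : ℝ) = (2 * m).choose m * m.factorial * m.factorial := by
    have := Nat.choose_mul_factorial_mul_factorial (show m ≤ 2 * m by omega)
    rw [show 2 * m - m = m by omega] at this
    exact_mod_cast this.symm
  have hm0 : (0 : ℝ) < m := by positivity
  simp only [stirlingSeq, hfact, Nat.cast_mul, Nat.cast_ofNat, div_pow, mul_pow, pow_mul]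
  rw [sq_sqrt (by positivity), sqrt_mul' _ hm0.le, show (2 : ℝ) * (2 * m) = 2 ^ 2 * m by ring,
    sqrt_mul' _ hm0.le, sqrt_sq (by norm_num)]
  field_simp
  rw [sq_sqrt hm0.le]
  ring

theorem tendsto_sqrt_pi_mul_choose_div_four_pow :
    Tendsto (fun m : ℕ => √(π * m) * (2 * m).choose m / 4 ^ m) atTop (nhds 1) := by
  have hπ : √π ^ 2 ≠ 0 := by positivity
  have := (tendsto_const_nhds (x := √π)).mul
    (tendsto_stirlingSeq_sqrt_pi.comp (tendsto_id.const_mul_atTop' two_pos)) |>.div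
    (tendsto_stirlingSeq_sqrt_pi.pow 2) hπ
  rw [← sq, div_self hπ] at this
  refine this.congr' ?_
  filter_upwards [eventually_ne_atTop 0] with m hm
  exact (sqrt_pi_mul_choose_div_four_pow_eq hm).symm

theorem tendsto_sqrt_pi_mul_choose_add_div_four_pow (d : ℕ) :
    Tendsto (fun m : ℕ => √(π * m) * (2 * m).choose (m + d) / 4 ^ m) atTop (nhds 1) := by
  induction d with
  | zero => exact tendsto_sqrt_pi_mul_choose_div_four_pow
  | succ d ih =>
    -- `C(2m, m + d + 1) / C(2m, m + d) = (m - d) / (m + d + 1) → 1`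
    have hratio := tendsto_add_mul_div_add_mul_atTop_nhds (-(d : ℝ)) (d + 1) 1 one_ne_zero
    rw [div_one] at hratio
    refine (mul_one (1 : ℝ) ▸ ih.mul hratio).congr' ?_
    filter_upwards [eventually_ge_atTop d] with m hm
    have key := Nat.choose_succ_right_eq (2 * m) (m + d)
    rw [show 2 * m - (m + d) = m - d by omega] at key
    have key' : ((2 * m).choose (m + d + 1) : ℝ) * (d + 1 + m) =
        (2 * m).choose (m + d) * (-d + m) := by
      have := congrArg (fun t : ℕ => (t : ℝ)) key
      push_cast [Nat.cast_sub hm] at this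
      linear_combination this
    rw [← add_assoc]
    field_simp
    linear_combination (-√(π * m)) * key'

theorem tendsto_sqrt_pi_mul_choose_add_sub_div_four_pow (u v : ℕ) :
    Tendsto (fun m : ℕ => √(π * m) * (2 * m).choose (m + v - u) / 4 ^ m) atTop (nhds 1) := by
  rcases le_total u v with huv | hvu
  · refine (tendsto_sqrt_pi_mul_choose_add_div_four_pow (v - u)).congr fun m => ?_
    rw [Nat.add_sub_assoc huv]
  · refine (tendsto_sqrt_pi_mul_choose_add_div_four_pow (u - v)).congr' ?_
    filter_upwards [eventually_ge_atTop u] with m hm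
    rw [Nat.choose_symm_of_eq_add (by omega : 2 * m = m + v - u + (m + (u - v)))]

theorem tendsto_sqrt_pi_mul_add_const_mul_choose_add_sub_div_four_pow (u v : ℕ) (c : ℝ) :
    Tendsto (fun m : ℕ => √(π * (m + c)) * (2 * m).choose (m + v - u) / 4 ^ m)
      atTop (nhds 1) := by
  have hratio := (tendsto_add_mul_div_add_mul_atTop_nhds c 0 1 one_ne_zero).sqrt
  rw [div_one, sqrt_one] at hratio
  refine (one_mul (1 : ℝ) ▸ hratio.mul
    (tendsto_sqrt_pi_mul_choose_add_sub_div_four_pow u v)).congr' ?_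
  filter_upwards [eventually_ne_atTop 0] with m hm
  rw [← mul_div_assoc, ← mul_assoc, ← sqrt_mul' _ (by positivity)]
  congr 3
  field_simp
  ring

theorem tendsto_mean_prod_choose_add_sub_div_four_pow {I L : Type*} [Fintype I] [Nonempty I]
    [Fintype L] (u v : I → L → ℕ) (c : ℝ) :
    Tendsto (fun m : ℕ => √(π * (m + c)) ^ Nat.card L * ((Nat.card I : ℝ)⁻¹ *
      ∑ i, ∏ l, ((2 * m).choose (m + v i l - u i l) : ℝ) / 4 ^ m)) atTop (nhds 1) := by
  have hterm := fun i => tendsto_finsetProd Finset.univ fun l _ =>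
    tendsto_sqrt_pi_mul_add_const_mul_choose_add_sub_div_four_pow (u i l) (v i l) c
  have hmean := (tendsto_finsetSum Finset.univ fun i _ => hterm i).const_mul (Nat.card I : ℝ)⁻¹
  simp only [Finset.prod_const_one, Finset.sum_const, Finset.card_univ, ← Nat.card_eq_fintype_card,
    nsmul_eq_mul, mul_one] at hmean
  rw [inv_mul_cancel₀ (by exact_mod_cast Nat.card_pos.ne')] at hmean
  refine hmean.congr fun m => ?_
  simp only [mul_div_assoc, Finset.prod_mul_distrib, Finset.prod_const, Finset.card_univ,
    Nat.card_eq_fintype_card, Finset.mul_sum]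
  exact Finset.sum_congr rfl fun i _ => mul_left_comm _ _ _

end Asymptotics

/-- For four fixed pairwise distinct vertices `i, j, i', j'`, the probability that in a
uniformly random graph on `n` vertices both `w₁(i) = w₁(j)` and `w₁(i') = w₁(j')` hold is
`(1 + o(1))/(π n)`: `π n · P(w₁(i) = w₁(j) ∧ w₁(i') = w₁(j')) → 1` as `n → ∞`. -/
theorem prob_two_disjoint_equal_degrees (i j i' j' : ℕ)
    (h1 : i ≠ j) (h2 : i ≠ i') (h3 : i ≠ j') (h4 : j ≠ i') (h5 : j ≠ j') (h6 : i' ≠ j') :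
    Tendsto (fun n : ℕ =>
      if h : i < n ∧ j < n ∧ i' < n ∧ j' < n then
        Real.pi * (n : ℝ) * Pr n (fun G =>
          walkCount G 1 ⟨i, h.1⟩ = walkCount G 1 ⟨j, h.2.1⟩ ∧
          walkCount G 1 ⟨i', h.2.2.1⟩ = walkCount G 1 ⟨j', h.2.2.2⟩)
      else 0)
      atTop (nhds 1) := by
  let q : Fin 2 × Bool → ℕ := fun x => bif x.2 then ![j, j'] x.1 else ![i, i'] x.1
  have hq : q.Injective := by
    rintro ⟨a, b⟩ ⟨a', b'⟩ h
    fin_cases a <;> fin_cases a' <;> cases b <;> cases b' <;> simp_all [q, eq_comm]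
  have hlim := (tendsto_mean_prod_choose_add_sub_div_four_pow
    (fun (H : SimpleGraph (Fin 2 × Bool)) l => Nat.card (H.neighborSet (l, false)))
    (fun H l => Nat.card (H.neighborSet (l, true))) 4).comp (tendsto_sub_atTop_nat 4)
  refine hlim.congr' ?_
  filter_upwards [eventually_gt_atTop (i + j + i' + j' + 8)] with n hn
  have hlt : ∀ x, q x < n := by
    rintro ⟨a, b⟩
    fin_cases a <;> cases b <;>
      simp only [q, Fin.zero_eta, Fin.mk_one, Matrix.cons_val_zero, Matrix.cons_val_one,
        Matrix.cons_val_fin_one, cond_false, cond_true] <;> omega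
  let p : Fin 2 × Bool ↪ Fin n := ⟨fun x => ⟨q x, hlt x⟩, fun x y h => hq (Fin.val_eq_of_eq h)⟩
  have hPr : Pr n (fun G => walkCount G 1 ⟨i, hlt (0, false)⟩ = walkCount G 1 ⟨j, hlt (0, true)⟩ ∧
      walkCount G 1 ⟨i', hlt (1, false)⟩ = walkCount G 1 ⟨j', hlt (1, true)⟩) =
      (Nat.card {G // SimpleGraph.HasEqualDegreesOnPairs p G} : ℝ) /
        Nat.card (SimpleGraph (Fin n)) := by
    simp only [Pr, SimpleGraph.HasEqualDegreesOnPairs, walkCount_one, Fin.forall_fin_two]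
    rfl
  rw [dif_pos (by omega), hPr, SimpleGraph.card_hasEqualDegreesOnPairs_div_card p (by simp; omega)]
  simp only [Function.comp_apply, Nat.card_eq_fintype_card, Fintype.card_fin]
  rw [Real.sq_sqrt (by positivity), Nat.cast_sub (by omega), Nat.cast_ofNat, sub_add_cancel]
end

section
/- Every WM-identifiable finite simple graph is CR-identifiable: if an n-vertex graph G has the property that every n-vertex graph H admitting a bijection f from V(G) to V(H) with w_k^G(x) = w_k^H(f(x)) for all x and all 0 ≤ k < n is isomorphic to G, then color refinement distinguishes G from every graph not isomorphic to G. -/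
/-!
Color refinement computes walk counts: `w_0 = 1` and `w_{k+1}(x)` is the sum of `w_k` over the
neighbours of `x`, so the `C_k`-color of `x` determines `w_k(x)`. If CR does not distinguish `G`
from `H`, a bijection matching the `C_n`-colors of the two graphs also matches all walk counts of
length `< n`; pulling `H` back along it to `Fin n`, WM-identifiability makes `G` isomorphic to `H`.
-/

/-- The type of colors produced after `k` rounds of color refinement. -/
def CRColor : ℕ → Type
  | 0 => Unit
  | k + 1 => CRColor k × Multiset (CRColor k)

/-- The color refinement coloring after `k` rounds: `C 0` is constant, and
`C (k+1) x = (C k x, {{C k y : y ∈ N(x)}})`. -/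
noncomputable def crColoring {V : Type*} [Fintype V] (G : SimpleGraph V) :
    (k : ℕ) → V → CRColor k
  | 0 => fun _ => ()
  | k + 1 => fun x =>
      (crColoring G k x, ((G.neighborSet x).toFinite.toFinset.val).map (crColoring G k))

/-- Color refinement, run on the disjoint union of `G` and `H`, distinguishes `G`
and `H`: for some `k` the multisets of `C_k`-colors on the two sides differ. -/
noncomputable def crDistinguishes {α β : Type} [Fintype α] [Fintype β]
    (G : SimpleGraph α) (H : SimpleGraph β) : Prop :=
  ∃ k : ℕ,
    (Finset.univ : Finset α).val.map (fun x => crColoring (G ⊕g H) k (Sum.inl x)) ≠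
    (Finset.univ : Finset β).val.map (fun y => crColoring (G ⊕g H) k (Sum.inr y))

open SimpleGraph

noncomputable def colorWalkCount : (k : ℕ) → CRColor k → ℕ
  | 0, _ => 1
  | k + 1, c => (c.2.map (colorWalkCount k)).sum

section WalkCount

variable {V : Type*} [Fintype V] (G : SimpleGraph V)

theorem walkCount_eq_sum_adjMatrix_pow [DecidableEq V] [DecidableRel G.Adj] (k : ℕ) (x : V) :
    walkCount G k x = ∑ y, (G.adjMatrix ℕ ^ k) x y := by
  let e : {p : (y : V) × G.Walk x y // p.2.length = k} ≃
      Σ y, {p : G.Walk x y | p.length = k} :=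
    ⟨fun p => ⟨p.1.1, p.1.2, p.2⟩, fun p => ⟨⟨p.1, p.2.1⟩, p.2.2⟩, fun _ => rfl, fun _ => rfl⟩
  simp_rw [walkCount, Nat.card_congr e, Nat.card_eq_fintype_card, Fintype.card_sigma,
    adjMatrix_pow_apply_eq_card_walk, Nat.cast_id]

theorem walkCount_zero (x : V) : walkCount G 0 x = 1 := by
  classical
  simp [walkCount_eq_sum_adjMatrix_pow, Matrix.one_apply]

theorem walkCount_succ (k : ℕ) (x : V) :
    walkCount G (k + 1) x = ∑ y ∈ (G.neighborSet x).toFinite.toFinset, walkCount G k y := by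
  classical
  have hN : (G.neighborSet x).toFinite.toFinset = G.neighborFinset x := by ext; simp
  simp_rw [hN, walkCount_eq_sum_adjMatrix_pow, pow_succ', adjMatrix_mul_apply]
  exact Finset.sum_comm

end WalkCount

theorem walkCount_eq_colorWalkCount_crColoring {V : Type*} [Fintype V] (G : SimpleGraph V)
    (k : ℕ) (x : V) : walkCount G k x = colorWalkCount k (crColoring G k x) := by
  induction k generalizing x with
  | zero => exact walkCount_zero G x
  | succ k ih =>
    rw [walkCount_succ, Finset.sum_congr rfl fun y _ => ih y]
    simp only [crColoring, colorWalkCount, Multiset.map_map]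
    rfl

theorem walkCount_eq_of_crColoring_eq {V W : Type*} [Fintype V] [Fintype W]
    {G : SimpleGraph V} {H : SimpleGraph W} {k : ℕ} {x : V} {y : W}
    (h : crColoring G k x = crColoring H k y) : walkCount G k x = walkCount H k y := by
  rw [walkCount_eq_colorWalkCount_crColoring, walkCount_eq_colorWalkCount_crColoring, h]

theorem crColoring_eq_of_le {V W : Type*} [Fintype V] [Fintype W]
    {G : SimpleGraph V} {H : SimpleGraph W} {j k : ℕ} {x : V} {y : W} (hjk : j ≤ k)
    (h : crColoring G k x = crColoring H k y) : crColoring G j x = crColoring H j y := by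
  induction hjk with
  | refl => exact h
  | step _ ih => exact ih (congrArg Prod.fst h)

theorem crColoring_apply_of_image_neighborSet {V W : Type*} [Fintype V] [Fintype W]
    {G : SimpleGraph V} {F : SimpleGraph W} (φ : G ↪g F)
    (hφ : ∀ x, φ '' G.neighborSet x = F.neighborSet (φ x)) (k : ℕ) (x : V) :
    crColoring F k (φ x) = crColoring G k x := by
  induction k generalizing x with
  | zero => rfl
  | succ k ih =>
    have hN : (F.neighborSet (φ x)).toFinite.toFinset =
        (G.neighborSet x).toFinite.toFinset.map φ.toEmbedding := by
      ext; simp [← hφ]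
    simp only [crColoring, hN, Finset.map_val, Multiset.map_map]
    congr 2
    · exact ih x
    · exact funext ih

theorem SimpleGraph.Iso.crColoring_apply {V W : Type*} [Fintype V] [Fintype W]
    {G : SimpleGraph V} {F : SimpleGraph W} (φ : G ≃g F) (k : ℕ) (x : V) :
    crColoring F k (φ x) = crColoring G k x :=
  crColoring_apply_of_image_neighborSet φ.toEmbedding (fun _ => φ.image_neighborSet) k x

theorem crColoring_sum_inl {V W : Type*} [Fintype V] [Fintype W]
    (G : SimpleGraph V) (H : SimpleGraph W) (k : ℕ) (x : V) :
    crColoring (G ⊕g H) k (Sum.inl x) = crColoring G k x :=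
  crColoring_apply_of_image_neighborSet Embedding.sumInl
    (fun x => (neighborSet_sum_inl x).symm) k x

theorem crColoring_sum_inr {V W : Type*} [Fintype V] [Fintype W]
    (G : SimpleGraph V) (H : SimpleGraph W) (k : ℕ) (y : W) :
    crColoring (G ⊕g H) k (Sum.inr y) = crColoring H k y :=
  crColoring_apply_of_image_neighborSet Embedding.sumInr
    (fun y => (neighborSet_sum_inr y).symm) k y

theorem exists_equiv_of_map_univ_val_eq {α β γ : Type*} [Fintype α] [Fintype β]
    {f : α → γ} {g : β → γ} (h : Finset.univ.val.map f = Finset.univ.val.map g) :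
    ∃ e : α ≃ β, ∀ x, f x = g (e x) := by
  classical
  have hfiber : ∀ c, Fintype.card {a // f a = c} = Fintype.card {b // g b = c} := by
    intro c
    simpa [Multiset.count_map, Fintype.card_subtype, Finset.card, Finset.filter, eq_comm]
      using congrArg (Multiset.count c) h
  exact ⟨Equiv.ofFiberEquiv fun c => Fintype.equivOfCardEq (hfiber c),
    fun x => (Equiv.ofFiberEquiv_map _ x).symm⟩

theorem exists_equiv_crColoring_eq_of_not_crDistinguishes {α β : Type} [Fintype α] [Fintype β]
    {G : SimpleGraph α} {H : SimpleGraph β} (h : ¬ crDistinguishes G H) (k : ℕ) :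
    ∃ e : α ≃ β, ∀ x, crColoring G k x = crColoring H k (e x) := by
  rw [crDistinguishes, not_exists_not] at h
  simpa only [crColoring_sum_inl, crColoring_sum_inr] using exists_equiv_of_map_univ_val_eq (h k)

/-- Every WM-identifiable graph is CR-identifiable: if every `n`-vertex graph `H`
admitting a bijection `f` with `w_k^G(x) = w_k^H(f(x))` for all `x` and all `k < n` is
isomorphic to `G`, then color refinement distinguishes `G` from every graph not
isomorphic to `G`. -/
theorem WMidentifiable_implies_CRidentifiable (n : ℕ) (G : SimpleGraph (Fin n))
    (hWM : ∀ H : SimpleGraph (Fin n),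
      (∃ f : Fin n ≃ Fin n, ∀ x : Fin n, ∀ k < n, walkCount G k x = walkCount H k (f x)) →
      Nonempty (G ≃g H)) :
    ∀ (β : Type) (_ : Fintype β) (H : SimpleGraph β),
      ¬ Nonempty (G ≃g H) → crDistinguishes G H := by
  intro β _ H hGH
  by_contra hCR
  obtain ⟨e, he⟩ := exists_equiv_crColoring_eq_of_not_crDistinguishes hCR n
  obtain ⟨ψ⟩ := hWM (H.comap e) ⟨Equiv.refl _, fun x k hk => walkCount_eq_of_crColoring_eq <| by
    rw [Equiv.refl_apply, ← (Iso.comap e H).crColoring_apply]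
    exact crColoring_eq_of_le hk.le (he x)⟩
  exact hGH ⟨ψ.trans (Iso.comap e H)⟩
end
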